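/- arXiv:0911.1835 — 5 statements merged into one kernel-verified Lean document; each statement's English description precedes it below -/
import Mathlib

section
/- Let γ: Δ → Δ' be a map between the root systems of two reductive Lie algebras induced by a root injection, sending positive roots to positive roots and negative roots to negative roots, and compatible with the induced injection of Weyl groups τ: W → W'. Then for every w ∈ W, the length of w (with respect to the chosen positive systems) is at most the length of τ(w). -/
open scoped Classical

theorem mapsTo_inversions {Δ Δ' W W' : Type*} [SMul W Δ] [SMul W' Δ']
    {pos : Δ → Prop} {pos' : Δ' → Prop} {γ : Δ → Δ'}
    (hγpos : ∀ α, pos α → pos' (γ α)) (hγneg : ∀ α, ¬ pos α → ¬ pos' (γ α))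
    {w : W} {w' : W'} (hcompat : ∀ α, γ (w • α) = w' • γ α) :
    Set.MapsTo γ {α | pos α ∧ ¬ pos (w • α)} {α' | pos' α' ∧ ¬ pos' (w' • α')} := by
  rintro α ⟨hα, hwα⟩
  exact ⟨hγpos α hα, hcompat α ▸ hγneg _ hwα⟩

theorem stmt_0_general
    {Δ Δ' : Type*} [Fintype Δ] [Fintype Δ']
    {W W' : Type*} [Group W] [Group W'] [MulAction W Δ] [MulAction W' Δ']
    (pos : Δ → Prop) (pos' : Δ' → Prop)
    (τ : W →* W')
    (γ : Δ → Δ') (hγinj : Function.Injective γ)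
    (hγpos : ∀ α, pos α → pos' (γ α))
    (hγneg : ∀ α, ¬ pos α → ¬ pos' (γ α))
    (hcompat : ∀ (w : W) (α : Δ), γ (w • α) = τ w • γ α)
    (w : W) :
    (Finset.univ.filter fun α : Δ => pos α ∧ ¬ pos (w • α)).card ≤
      (Finset.univ.filter fun α' : Δ' => pos' α' ∧ ¬ pos' (τ w • α')).card := by
  refine Finset.card_le_card_of_injOn γ ?_ hγinj.injOn
  simpa only [Finset.coe_filter, Finset.mem_univ, true_and]
    using mapsTo_inversions hγpos hγneg (hcompat w)

/-- Let `γ : Δ → Δ'` be the map on roots induced by a root injection of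
reductive Lie algebras, sending positive roots to positive roots and negative roots to
negative roots, compatible with the induced injection `τ : W → W'` of Weyl groups.
Then for every `w ∈ W` the length of `w`, i.e. the cardinality of
`Φ_w = (w⁻¹Δ⁻) ∩ Δ⁺ = {α ∈ Δ⁺ : w • α ∈ Δ⁻}`, is at most the length of `τ w`. -/
theorem stmt_0
    {Δ Δ' : Type*} [Fintype Δ] [Fintype Δ']
    {W W' : Type*} [Group W] [Group W'] [MulAction W Δ] [MulAction W' Δ']
    (pos : Δ → Prop) (pos' : Δ' → Prop)
    (τ : W →* W') (hτ : Function.Injective τ)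
    (γ : Δ → Δ') (hγinj : Function.Injective γ)
    (hγpos : ∀ α, pos α → pos' (γ α))
    (hγneg : ∀ α, ¬ pos α → ¬ pos' (γ α))
    (hcompat : ∀ (w : W) (α : Δ), γ (w • α) = τ w • γ α)
    (w : W) :
    (Finset.univ.filter fun α : Δ => pos α ∧ ¬ pos (w • α)).card ≤
      (Finset.univ.filter fun α' : Δ' => pos' α' ∧ ¬ pos' (τ w • α')).card :=
  stmt_0_general pos pos' τ γ hγinj hγpos hγneg hcompat w
end

section
/- Let {aₙⁱ : 1 ≤ i ≤ 2ⁿ−1, n ≥ 1} be nonnegative integers satisfying the recursions aₙⁱ = a₍ₙ₊₁₎^{2i−1} + 2·a₍ₙ₊₁₎^{2i} + a₍ₙ₊₁₎^{2i+1} for all n ≥ 1 and 1 ≤ i ≤ 2ⁿ−1. Then there exists n₀ such that for all n > n₀: aₙⁱ = 0 for 2 ≤ i ≤ 2ⁿ−2, and aₙ¹ = a₍ₙ₊₁₎¹ and aₙ^{2ⁿ−1} = a₍ₙ₊₁₎^{2^{n+1}−1}. In particular, such systems are parametrized by two nonnegative integers a', a'' (the eventual values of aₙ¹ and aₙ^{2ⁿ−1}).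 -/
/-! Summing the recursion over `i` counts every interior coordinate of level `n + 1` twice and
each of its two endpoints once, so the level sums `bₙ = ∑ᵢ aₙⁱ` satisfy
`bₙ = bₙ₊₁ + ∑_{1 < i < 2ⁿ⁺¹ - 1} aₙ₊₁ⁱ`. Hence `(bₙ)` is a non-increasing sequence of naturals,
eventually constant, and from then on all interior coordinates vanish; the recursion at `i = 1`
and `i = 2ⁿ - 1` then collapses to the two endpoint equalities. -/

open Finset

theorem Finset.sum_Icc_eq_add_add_sum_Ioo {M : Type*} [AddCommMonoid M] (f : ℕ → M) {m n : ℕ}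
    (h : m < n) : ∑ i ∈ Icc m n, f i = f m + f n + ∑ i ∈ Ioo m n, f i := by
  rw [Icc_eq_cons_Ioc h.le, sum_cons, Ioc_eq_cons_Ioo h, sum_cons, add_assoc]

theorem Finset.sum_Icc_stencil_add_ends {R : Type*} [CommSemiring R] (f : ℕ → R) (m : ℕ) :
    ∑ i ∈ Icc 1 m, (f (2 * i - 1) + 2 * f (2 * i) + f (2 * i + 1)) + f 1 + f (2 * m + 1) =
      2 * ∑ j ∈ Icc 1 (2 * m + 1), f j := by
  induction m with
  | zero => simp only [Icc_self, Icc_eq_empty_of_lt one_pos, sum_empty, sum_singleton]; ring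
  | succ m ih =>
    rw [sum_Icc_succ_top (by omega), show 2 * (m + 1) - 1 = 2 * m + 1 by omega,
      show 2 * (m + 1) = 2 * m + 1 + 1 by ring,
      sum_Icc_succ_top (by omega), sum_Icc_succ_top (by omega), mul_add, mul_add, ← ih]
    ring

def IsRestrictionCompatible (a : ℕ → ℕ → ℕ) : Prop :=
  ∀ n, 1 ≤ n → ∀ i, 1 ≤ i → i ≤ 2 ^ n - 1 →
    a n i = a (n + 1) (2 * i - 1) + 2 * a (n + 1) (2 * i) + a (n + 1) (2 * i + 1)

def levelSum (a : ℕ → ℕ → ℕ) (n : ℕ) : ℕ := ∑ i ∈ Icc 1 (2 ^ n - 1), a n i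

def interiorSum (a : ℕ → ℕ → ℕ) (n : ℕ) : ℕ := ∑ i ∈ Ioo 1 (2 ^ n - 1), a n i

theorem levelSum_eq_add_add_interiorSum (a : ℕ → ℕ → ℕ) {n : ℕ} (hn : 2 ≤ n) :
    levelSum a n = a n 1 + a n (2 ^ n - 1) + interiorSum a n :=
  sum_Icc_eq_add_add_sum_Ioo _ (by have := Nat.pow_le_pow_right two_pos hn; omega)

theorem eq_zero_of_interiorSum_eq_zero {a : ℕ → ℕ → ℕ} {n : ℕ} (h : interiorSum a n = 0)
    {i : ℕ} (hi₁ : 2 ≤ i) (hi₂ : i ≤ 2 ^ n - 2) : a n i = 0 :=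
  sum_eq_zero_iff.1 h i (mem_Ioo.2 ⟨hi₁, by omega⟩)

namespace IsRestrictionCompatible

variable {a : ℕ → ℕ → ℕ} (hrec : IsRestrictionCompatible a)
include hrec

theorem levelSum_eq {n : ℕ} (hn : 1 ≤ n) :
    levelSum a n = levelSum a (n + 1) + interiorSum a (n + 1) := by
  have hlevel : levelSum a n = ∑ i ∈ Icc 1 (2 ^ n - 1),
      (a (n + 1) (2 * i - 1) + 2 * a (n + 1) (2 * i) + a (n + 1) (2 * i + 1)) :=
    sum_congr rfl fun i hi => hrec n hn i (mem_Icc.1 hi).1 (mem_Icc.1 hi).2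
  have hodd : 2 * (2 ^ n - 1) + 1 = 2 ^ (n + 1) - 1 := by
    have := Nat.one_le_two_pow (n := n); rw [pow_succ]; omega
  have hstencil := sum_Icc_stencil_add_ends (a (n + 1)) (2 ^ n - 1)
  rw [← hlevel, hodd] at hstencil
  change _ = 2 * levelSum a (n + 1) at hstencil
  have := levelSum_eq_add_add_interiorSum a (n := n + 1) (by omega)
  omega

theorem levelSum_antitone : Antitone fun n => levelSum a (n + 1) :=
  antitone_nat_of_succ_le fun n => by
    have := hrec.levelSum_eq (n := n + 1) (by omega)
    omega

theorem eventually_interiorSum_eq_zero : ∃ N, ∀ n, N < n → interiorSum a n = 0 := by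
  obtain ⟨N, hN⟩ := WellFoundedLT.antitone_chain_condition hrec.levelSum_antitone
  refine ⟨N + 1, fun n hn => ?_⟩
  obtain ⟨k, rfl⟩ : ∃ k, n = k + 1 + 1 := ⟨n - 2, by omega⟩
  have := hrec.levelSum_eq (n := k + 1) (by omega)
  have := hN k (by omega)
  have := hN (k + 1) (by omega)
  omega

theorem first_eq_of_interiorSum_eq_zero {n : ℕ} (hn : 2 ≤ n) (h : interiorSum a (n + 1) = 0) :
    a n 1 = a (n + 1) 1 := by
  have hpow := Nat.pow_le_pow_right two_pos (Nat.succ_le_succ hn)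
  have := hrec n (by omega) 1 le_rfl (by omega)
  rw [eq_zero_of_interiorSum_eq_zero h le_rfl (by omega),
    eq_zero_of_interiorSum_eq_zero h (by omega : 2 ≤ 2 * 1 + 1) (by omega)] at this
  simpa using this

theorem last_eq_of_interiorSum_eq_zero {n : ℕ} (hn : 2 ≤ n) (h : interiorSum a (n + 1) = 0) :
    a n (2 ^ n - 1) = a (n + 1) (2 ^ (n + 1) - 1) := by
  have hpow := Nat.pow_le_pow_right two_pos hn
  have := hrec n (by omega) (2 ^ n - 1) (by omega) le_rfl
  have hpow_succ : 2 ^ (n + 1) = 2 * 2 ^ n := by rw [pow_succ, mul_comm]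
  rw [eq_zero_of_interiorSum_eq_zero h (i := 2 * (2 ^ n - 1) - 1) (by omega) (by omega),
    eq_zero_of_interiorSum_eq_zero h (i := 2 * (2 ^ n - 1)) (by omega) (by omega),
    show 2 * (2 ^ n - 1) + 1 = 2 ^ (n + 1) - 1 by omega] at this
  simpa using this

end IsRestrictionCompatible

/-- (Dominant weights of `SL(2^∞)` for the interlacing Borel subgroup.)
Let `aₙⁱ` (for `n ≥ 1`, `1 ≤ i ≤ 2ⁿ − 1`) be nonnegative integers satisfying
`aₙⁱ = aₙ₊₁^{2i−1} + 2·aₙ₊₁^{2i} + aₙ₊₁^{2i+1}`.  Then there exists `n₀` such that for all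
`n > n₀`: `aₙⁱ = 0` for `2 ≤ i ≤ 2ⁿ − 2`, while `aₙ¹ = aₙ₊₁¹` and
`aₙ^{2ⁿ−1} = aₙ₊₁^{2^{n+1}−1}`. -/
theorem stmt_2 (a : ℕ → ℕ → ℕ)
    (hrec : ∀ n, 1 ≤ n → ∀ i, 1 ≤ i → i ≤ 2 ^ n - 1 →
      a n i = a (n + 1) (2 * i - 1) + 2 * a (n + 1) (2 * i) + a (n + 1) (2 * i + 1)) :
    ∃ n₀ : ℕ, ∀ n, n₀ < n →
      (∀ i, 2 ≤ i → i ≤ 2 ^ n - 2 → a n i = 0) ∧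
      a n 1 = a (n + 1) 1 ∧
      a n (2 ^ n - 1) = a (n + 1) (2 ^ (n + 1) - 1) := by
  have hrec : IsRestrictionCompatible a := hrec
  obtain ⟨N, hN⟩ := hrec.eventually_interiorSum_eq_zero
  refine ⟨N + 1, fun n hn => ⟨fun i hi₁ hi₂ => ?_, ?_, ?_⟩⟩
  · exact eq_zero_of_interiorSum_eq_zero (hN n (by omega)) hi₁ hi₂
  · exact hrec.first_eq_of_interiorSum_eq_zero (by omega) (hN (n + 1) (by omega))
  · exact hrec.last_eq_of_interiorSum_eq_zero (by omega) (hN (n + 1) (by omega))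
end

section
/- Let {aₙⁱ : 1 ≤ i ≤ 2ⁿ−1, n ≥ 1} be nonnegative integers satisfying aₙⁱ = a₍ₙ₊₁₎^{2i} + 2·a₍ₙ₊₁₎^{2i+1} + a₍ₙ₊₁₎^{2i+2} for 1 ≤ i ≤ 2ⁿ−2 and aₙ^{2ⁿ−1} = a₍ₙ₊₁₎^{2^{n+1}−2} + 2·a₍ₙ₊₁₎^{2^{n+1}−1}, for all n. Then aₙⁱ = 0 for all n and all i. -/
/-!
Write `T n s = ∑_{s ≤ j ≤ 2ⁿ-1} aₙʲ` for the tail sums of level `n`. Summing the recursion over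
`i ≥ s` gives `T n s = aₙ₊₁^{2s} + 2·T (n+1) (2s+1)`, hence `2·T (n+1) (2s+1) ≤ T n s` and
`T n s ≤ 2·T (n+1) (2s)`. The second inequality shows that a positive tail `T n (s+1)` stays positive
along `s ↦ 2s+1`, while the first halves `T n s` along the same path; so `T n s ≥ 2ᵏ` for every `k`,
which is absurd. Hence all tails from index `2` on vanish, and `aₙⁱ ≤ T n i ≤ 2·T (n+1) (2i) = 0`.
-/

open Finset

structure SatisfiesWeightRecursion (a : ℕ → ℕ → ℕ) : Prop where
  interior : ∀ n, 1 ≤ n → ∀ i, 1 ≤ i → i ≤ 2 ^ n - 2 →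
    a n i = a (n + 1) (2 * i) + 2 * a (n + 1) (2 * i + 1) + a (n + 1) (2 * i + 2)
  last : ∀ n, 1 ≤ n →
    a n (2 ^ n - 1) = a (n + 1) (2 ^ (n + 1) - 2) + 2 * a (n + 1) (2 ^ (n + 1) - 1)

def tailSum (a : ℕ → ℕ → ℕ) (n s : ℕ) : ℕ := ∑ j ∈ Icc s (2 ^ n - 1), a n j

variable {a : ℕ → ℕ → ℕ} {n s : ℕ}

theorem tailSum_eq_add_tailSum_succ (hs : s ≤ 2 ^ n - 1) :
    tailSum a n s = a n s + tailSum a n (s + 1) := by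
  rw [tailSum, tailSum, Icc_eq_cons_Ioc hs, sum_cons, Icc_add_one_left_eq_Ioc]

theorem tailSum_eq_zero_of_lt (hs : 2 ^ n - 1 < s) : tailSum a n s = 0 := by
  rw [tailSum, Icc_eq_empty_of_lt hs, sum_empty]

theorem tailSum_self : tailSum a n (2 ^ n - 1) = a n (2 ^ n - 1) := by
  rw [tailSum, Icc_self, sum_singleton]

theorem tailSum_antitone : Antitone (tailSum a n) :=
  fun _ _ hst => sum_le_sum_of_subset (Icc_subset_Icc_left hst)

theorem le_tailSum {i : ℕ} (hs : s ≤ i) (hi : i ≤ 2 ^ n - 1) : a n i ≤ tailSum a n s :=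
  single_le_sum (fun _ _ => Nat.zero_le _) (mem_Icc.2 ⟨hs, hi⟩)

namespace SatisfiesWeightRecursion

variable (ha : SatisfiesWeightRecursion a)
include ha

theorem tailSum_eq (hn : 1 ≤ n) (hs : 1 ≤ s) (hs' : s ≤ 2 ^ n - 1) :
    tailSum a n s = a (n + 1) (2 * s) + 2 * tailSum a (n + 1) (2 * s + 1) := by
  have h2 : 2 ≤ 2 ^ n := Nat.le_self_pow (by omega) 2
  have hpow : 2 ^ (n + 1) = 2 * 2 ^ n := pow_succ' 2 n
  induction hd : 2 ^ n - 1 - s generalizing s with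
  | zero =>
    obtain rfl : s = 2 ^ n - 1 := by omega
    rw [show 2 * (2 ^ n - 1) = 2 ^ (n + 1) - 2 by omega,
      show 2 ^ (n + 1) - 2 + 1 = 2 ^ (n + 1) - 1 by omega, tailSum_self, tailSum_self, ha.last n hn]
  | succ d ih =>
    rw [tailSum_eq_add_tailSum_succ hs', ha.interior n hn s hs (by omega),
      ih (s := s + 1) (by omega) (by omega) (by omega),
      tailSum_eq_add_tailSum_succ (n := n + 1) (s := 2 * s + 1) (by omega),
      tailSum_eq_add_tailSum_succ (n := n + 1) (s := 2 * s + 1 + 1) (by omega)]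
    ring_nf

theorem two_mul_tailSum_le (hn : 1 ≤ n) (hs : 1 ≤ s) :
    2 * tailSum a (n + 1) (2 * s + 1) ≤ tailSum a n s := by
  rcases le_or_gt s (2 ^ n - 1) with hs' | hs'
  · rw [ha.tailSum_eq hn hs hs']
    exact Nat.le_add_left _ _
  · rw [tailSum_eq_zero_of_lt (by rw [pow_succ]; omega)]
    exact Nat.zero_le _

theorem tailSum_le_two_mul (hn : 1 ≤ n) (hs : 1 ≤ s) :
    tailSum a n s ≤ 2 * tailSum a (n + 1) (2 * s) := by
  rcases le_or_gt s (2 ^ n - 1) with hs' | hs'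
  · have h2 : 2 ≤ 2 ^ n := Nat.le_self_pow (by omega) 2
    rw [ha.tailSum_eq hn hs hs',
      tailSum_eq_add_tailSum_succ (n := n + 1) (s := 2 * s) (by rw [pow_succ]; omega)]
    omega
  · rw [tailSum_eq_zero_of_lt hs']
    exact Nat.zero_le _

theorem two_pow_le_tailSum (k : ℕ) (hn : 1 ≤ n) (hs : 1 ≤ s) (hpos : 0 < tailSum a n (s + 1)) :
    2 ^ k ≤ tailSum a n s := by
  induction k generalizing n s with
  | zero => exact hpos.trans_le (tailSum_antitone s.le_succ)
  | succ k ih =>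
    have hpos' : 0 < tailSum a (n + 1) (2 * s + 1 + 1) := by
      have := ha.tailSum_le_two_mul hn (s := s + 1) (by omega)
      rw [show 2 * (s + 1) = 2 * s + 1 + 1 by ring] at this
      omega
    calc 2 ^ (k + 1) = 2 * 2 ^ k := pow_succ' 2 k
      _ ≤ 2 * tailSum a (n + 1) (2 * s + 1) := by
        gcongr
        exact ih (by omega) (by omega) hpos'
      _ ≤ tailSum a n s := ha.two_mul_tailSum_le hn hs

theorem tailSum_eq_zero (hn : 1 ≤ n) (hs : 2 ≤ s) : tailSum a n s = 0 := by
  obtain ⟨t, rfl⟩ : ∃ t, s = t + 1 := ⟨s - 1, by omega⟩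
  by_contra hne
  exact (tailSum a n t).lt_two_pow_self.not_ge
    (ha.two_pow_le_tailSum _ hn (by omega) (Nat.pos_of_ne_zero hne))

theorem eq_zero (hn : 1 ≤ n) {i : ℕ} (hi : 1 ≤ i) (hi' : i ≤ 2 ^ n - 1) : a n i = 0 := by
  have := (le_tailSum le_rfl hi').trans (ha.tailSum_le_two_mul hn hi)
  rw [ha.tailSum_eq_zero (by omega) (by omega)] at this
  omega

end SatisfiesWeightRecursion

/-- (Dominant weights of `Sp(2^∞+1)` for an interlacing Borel subgroup
are zero.)  Let `aₙⁱ` (for `n ≥ 1`, `1 ≤ i ≤ 2ⁿ − 1`) be nonnegative integers satisfying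
`aₙⁱ = aₙ₊₁^{2i} + 2·aₙ₊₁^{2i+1} + aₙ₊₁^{2i+2}` for `1 ≤ i ≤ 2ⁿ − 2` and
`aₙ^{2ⁿ−1} = aₙ₊₁^{2^{n+1}−2} + 2·aₙ₊₁^{2^{n+1}−1}`.  Then all `aₙⁱ` vanish. -/
theorem stmt_3 (a : ℕ → ℕ → ℕ)
    (hrec : ∀ n, 1 ≤ n → ∀ i, 1 ≤ i → i ≤ 2 ^ n - 2 →
      a n i = a (n + 1) (2 * i) + 2 * a (n + 1) (2 * i + 1) + a (n + 1) (2 * i + 2))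
    (hlast : ∀ n, 1 ≤ n →
      a n (2 ^ n - 1) = a (n + 1) (2 ^ (n + 1) - 2) + 2 * a (n + 1) (2 ^ (n + 1) - 1)) :
    ∀ n, 1 ≤ n → ∀ i, 1 ≤ i → i ≤ 2 ^ n - 1 → a n i = 0 :=
  fun _ hn _ hi hi' => SatisfiesWeightRecursion.eq_zero ⟨hrec, hlast⟩ hn hi hi'
end

section
/- Let G be a diagonal ind-group with Borel subgroup B and let λ = lim λₙ be a weight of G. Then there is at most one j ≥ 0 with H^j(G/B, O_{−λ}) ≠ 0. -/
theorem InverseSystem.eq_zero_of_le {M : ℕ → Type*} [∀ n, AddZeroClass (M n)]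
    (g : ∀ n, M (n + 1) →+ M n) {x : ∀ n, M n} (hx : ∀ n, g n (x (n + 1)) = x n)
    {a b : ℕ} (hab : a ≤ b) (hb : x b = 0) : x a = 0 := by
  induction b, hab using Nat.le_induction with
  | base => exact hb
  | succ b _ ih => exact ih (by rw [← hx b, hb, map_zero])

theorem InverseSystem.ne_zero_of_le {M : ℕ → Type*} [∀ n, AddZeroClass (M n)]
    (g : ∀ n, M (n + 1) →+ M n) {x : ∀ n, M n} (hx : ∀ n, g n (x (n + 1)) = x n)
    {a b : ℕ} (hab : a ≤ b) (ha : x a ≠ 0) : x b ≠ 0 :=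
  mt (InverseSystem.eq_zero_of_le g hx hab) ha

/-- Let `G` be a diagonal ind-group with Borel subgroup `B` and
`λ = lim λₙ` a weight of `G`.  Writing `A n j = H^j(Gₙ/Bₙ, O_{−λₙ})` with the natural
restriction maps `f n j : A (n+1) j → A n j`, and using the classical Bott–Borel–Weil
theorem — at each finite level at most one degree `j` carries nonzero cohomology —
there is at most one `j ≥ 0` for which
`H^j(G/B, O_{−λ}) = lim← A n j` is nonzero. -/
theorem stmt_14 (A : ℕ → ℕ → Type*) [∀ n j, AddCommGroup (A n j)]
    (f : ∀ n j, A (n + 1) j →+ A n j)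
    (hBBW : ∀ n j j', (∃ x : A n j, x ≠ 0) → (∃ y : A n j', y ≠ 0) → j = j') :
    ∀ j j' : ℕ,
      (∃ x : ∀ n, A n j, (∀ n, f n j (x (n + 1)) = x n) ∧ ∃ n, x n ≠ 0) →
      (∃ y : ∀ n, A n j', (∀ n, f n j' (y (n + 1)) = y n) ∧ ∃ n, y n ≠ 0) →
      j = j' := by
  rintro j j' ⟨x, hx, n, hxn⟩ ⟨y, hy, m, hym⟩
  have hx_max : x (max n m) ≠ 0 :=
    InverseSystem.ne_zero_of_le (M := (A · j)) (f · j) hx (le_max_left n m) hxn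
  have hy_max : y (max n m) ≠ 0 :=
    InverseSystem.ne_zero_of_le (M := (A · j')) (f · j') hy (le_max_right n m) hym
  exact hBBW (max n m) j j' ⟨_, hx_max⟩ ⟨_, hy_max⟩
end

section
/- Let B be the upper triangular Borel subgroup of SL(2^∞) and let λ = lim λₙ with fundamental-weight coefficients satisfying aₙ¹ = n and aₙ^{2^{n−1}+1} = −1 (and compatibility aₙⁱ = a₍ₙ₊₁₎ⁱ + a₍ₙ₊₁₎^{2ⁿ+i}). Let w ∈ W_B be the length-one element with w(n) the simple reflection in the first simple root of bₙ for all n. Then w(n+1)(λₙ₊₁) restricts to λₙ − (n+1)(εₙ¹ − εₙ²) while w(n)(λₙ) = λₙ − n(εₙ¹ − εₙ²); hence {w(n)(λₙ)} is not an inverse system of weights, and W_B does not act on all of P. -/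
/-!
The reflection `σ_α` in `α = ε¹ − ε²` acts on `ε`-coordinates as `λ ↦ λ − (λ¹ − λ²) α`, and
restriction from level `n + 1` to level `n` carries `α` to `α` (the coordinates `2ⁿ + 1`,
`2ⁿ + 2` are left alone). Hence restricting `σ_α λₙ₊₁` subtracts `aₙ₊₁¹ α = (n + 1) α` from
`λₙ`, whereas `σ_α λₙ` only subtracts `aₙ¹ α = n α`: the coefficient `aₙ¹ = n` grows with `n`.
-/

/-- The simple reflection in the first simple root `εₙ¹ − εₙ²` of `sl(2ⁿ)`, acting on a
weight written in `ε`-coordinates (`lam i` is the coefficient of `εₙⁱ`, `1 ≤ i ≤ 2ⁿ`):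
it swaps the first two coordinates. -/
def swap12 (f : ℕ → ℤ) : ℕ → ℤ :=
  fun i => if i = 1 then f 2 else if i = 2 then f 1 else f i

def firstSimpleRoot (i : ℕ) : ℤ :=
  if i = 1 then 1 else if i = 2 then -1 else 0

theorem swap12_apply_eq_sub (f : ℕ → ℤ) (i : ℕ) :
    swap12 f i = f i - (f 1 - f 2) * firstSimpleRoot i := by
  unfold swap12 firstSimpleRoot
  split_ifs <;> subst_vars <;> ring

theorem firstSimpleRoot_of_three_le {i : ℕ} (hi : 3 ≤ i) : firstSimpleRoot i = 0 := by
  unfold firstSimpleRoot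
  split_ifs <;> omega

theorem swap12_add_swap12_two_pow_add (g : ℕ → ℤ) {n i : ℕ} (hn : 1 ≤ n) (hi : 1 ≤ i) :
    swap12 g i + swap12 g (2 ^ n + i) =
      g i + g (2 ^ n + i) - (g 1 - g 2) * firstSimpleRoot i := by
  have h_far : 3 ≤ 2 ^ n + i := by
    have : 2 ≤ 2 ^ n := Nat.le_self_pow (by omega) 2
    omega
  rw [swap12_apply_eq_sub g i, swap12_apply_eq_sub g (2 ^ n + i),
    firstSimpleRoot_of_three_le h_far]
  ring

theorem stmt_16_general (lam : ℕ → ℕ → ℤ)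
    (hres : ∀ n, 1 ≤ n → ∀ i, 1 ≤ i → i ≤ 2 ^ n →
      lam n i = lam (n + 1) i + lam (n + 1) (2 ^ n + i))
    (ha1 : ∀ n, 1 ≤ n → lam n 1 - lam n 2 = (n : ℤ)) :
    ∀ n, 1 ≤ n →
      ((∀ i, 1 ≤ i → i ≤ 2 ^ n →
        swap12 (lam (n + 1)) i + swap12 (lam (n + 1)) (2 ^ n + i) =
          lam n i - (n + 1) * (if i = 1 then 1 else if i = 2 then -1 else 0)) ∧
      (∀ i, 1 ≤ i → i ≤ 2 ^ n →
        swap12 (lam n) i =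
          lam n i - (n : ℤ) * (if i = 1 then 1 else if i = 2 then -1 else 0)) ∧
      (∃ i, 1 ≤ i ∧ i ≤ 2 ^ n ∧
        swap12 (lam (n + 1)) i + swap12 (lam (n + 1)) (2 ^ n + i) ≠
          swap12 (lam n) i)) := by
  intro n hn
  have h_restrict : ∀ i, 1 ≤ i → i ≤ 2 ^ n →
      swap12 (lam (n + 1)) i + swap12 (lam (n + 1)) (2 ^ n + i) =
        lam n i - (n + 1) * firstSimpleRoot i := by
    intro i hi hi'
    rw [swap12_add_swap12_two_pow_add _ hn hi, ← hres n hn i hi hi', ha1 (n + 1) (by omega)]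
    push_cast
    rfl
  have h_reflect : ∀ i, swap12 (lam n) i = lam n i - n * firstSimpleRoot i := fun i => by
    rw [swap12_apply_eq_sub, ha1 n hn]
  refine ⟨h_restrict, fun i _ _ => h_reflect i, 1, le_rfl, Nat.one_le_two_pow, ?_⟩
  rw [h_restrict 1 le_rfl Nat.one_le_two_pow, h_reflect, firstSimpleRoot]
  simp

/-- (`W_B` does not act on all of `P`.)  Let `B` be the upper
triangular Borel subgroup of `SL(2^∞) = lim SL(2ⁿ)`, where `εₙ₊₁ⁱ` and `εₙ₊₁^{2ⁿ+i}`
both restrict to `εₙⁱ`, so a weight `λ = lim λₙ` (coordinates `lam n i` of `λₙ` in the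
`ε`-basis) satisfies `lam n i = lam (n+1) i + lam (n+1) (2ⁿ + i)`.  Suppose its
fundamental-weight coefficients satisfy `aₙ¹ = lam n 1 − lam n 2 = n` and
`aₙ^{2^{n−1}+1} = lam n (2^{n−1}+1) − lam n (2^{n−1}+2) = −1`.  Let `w ∈ W_B` be the
length-one element with `w(n)` the simple reflection in the first simple root, i.e. the
swap of the first two `ε`-coordinates.  Then for every `n ≥ 1`:
(a) the restriction of `w(n+1)(λₙ₊₁)` equals `λₙ − (n+1)(εₙ¹ − εₙ²)`;
(b) `w(n)(λₙ) = λₙ − n(εₙ¹ − εₙ²)`;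
(c) hence those two disagree at some coordinate, so `{w(n)(λₙ)}` is not an inverse
system of weights. -/
theorem stmt_16 (lam : ℕ → ℕ → ℤ)
    (hres : ∀ n, 1 ≤ n → ∀ i, 1 ≤ i → i ≤ 2 ^ n →
      lam n i = lam (n + 1) i + lam (n + 1) (2 ^ n + i))
    (ha1 : ∀ n, 1 ≤ n → lam n 1 - lam n 2 = (n : ℤ))
    (hmid : ∀ n, 2 ≤ n →
      lam n (2 ^ (n - 1) + 1) - lam n (2 ^ (n - 1) + 2) = -1) :
    ∀ n, 1 ≤ n →
      ((∀ i, 1 ≤ i → i ≤ 2 ^ n →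
        swap12 (lam (n + 1)) i + swap12 (lam (n + 1)) (2 ^ n + i) =
          lam n i - (n + 1) * (if i = 1 then 1 else if i = 2 then -1 else 0)) ∧
      (∀ i, 1 ≤ i → i ≤ 2 ^ n →
        swap12 (lam n) i =
          lam n i - (n : ℤ) * (if i = 1 then 1 else if i = 2 then -1 else 0)) ∧
      (∃ i, 1 ≤ i ∧ i ≤ 2 ^ n ∧
        swap12 (lam (n + 1)) i + swap12 (lam (n + 1)) (2 ^ n + i) ≠
          swap12 (lam n) i)) :=
  stmt_16_general lam hres ha1
end
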